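/- Let a > 0 and ρ ∈ [0,1), and for n ∈ ℤ define fₙ : ℝ → ℂ by fₙ(t) = e^{-at + 2π(n+ρ)it} 𝟙_{[0,∞)}(t), so fₙ ∈ L²(ℝ;ℂ). Then (fₙ)_{n∈ℤ} is a Riesz sequence in L²(ℝ): for every finitely supported family (cₙ)_{n∈ℤ} of complex numbers, (e^{-2a}/(e^{2a}-1)) Σ_{n∈ℤ} |cₙ|² ≤ ‖Σ_{n∈ℤ} cₙ fₙ‖²_{L²(ℝ)} ≤ (e^{2a}/(e^{2a}-1)) Σ_{n∈ℤ} |cₙ|². -/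

import Mathlib

/-!
For `t ≥ 0` we have `|∑ cₙ fₙ(t)|² = e^{-2at} |p(t)|²` with `p(t) = ∑ cₙ e^{2πi(n+ρ)t}`.
By orthogonality of the characters `e^{2πimt}`, `m ∈ ℤ`, the integral of `|p|²` over every interval
`[k, k+1]` equals `∑ |cₙ|²`. On `[k, k+1]` the weight `e^{-2at}` lies between `r^{k+1}` and `r^k`,
where `r = e^{-2a}`, and summing the two geometric series over `k ∈ ℕ` gives
`∑ |cₙ|² / (e^{2a} - 1) ≤ ‖∑ cₙ fₙ‖² ≤ e^{2a} ∑ |cₙ|² / (e^{2a} - 1)`.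
-/

open MeasureTheory Complex Set

noncomputable section

/-- The functions `fₙ(t) = e^{-at + 2π(n+ρ)it} 𝟙_{[0,∞)}(t)`. -/
def rieszFun (a ρ : ℝ) (n : ℤ) : ℝ → ℂ :=
  Set.indicator (Set.Ici (0 : ℝ))
    (fun t : ℝ => Complex.exp ((-(a : ℂ) + 2 * Real.pi * ((n : ℝ) + ρ) * Complex.I) * t))

open Real ComplexConjugate

theorem integral_exp_two_pi_int_mul_I (x : ℝ) (k : ℤ) :
    ∫ t in x..x + 1, cexp (2 * π * k * I * t) = if k = 0 then 1 else 0 := by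
  split_ifs with hk
  · simp [hk]
  · have hc : (2 * π * k * I : ℂ) ≠ 0 := by simp [Real.pi_ne_zero, hk]
    have hperiodic : cexp (2 * π * k * I * ↑(x + 1)) = cexp (2 * π * k * I * x) := by
      rw [ofReal_add, ofReal_one, mul_add, mul_one, Complex.exp_add,
        show (2 * π * k * I : ℂ) = k * (2 * π * I) by ring, exp_int_mul_two_pi_mul_I, mul_one]
    rw [integral_exp_mul_complex hc, hperiodic, sub_self, zero_div]

theorem ofReal_sq_norm_sum_mul_exp (ρ t : ℝ) (s : Finset ℤ) (c : ℤ → ℂ) :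
    ((‖∑ n ∈ s, c n * cexp (2 * π * (n + ρ) * I * t)‖ ^ 2 : ℝ) : ℂ) =
      ∑ n ∈ s, ∑ m ∈ s, c n * conj (c m) * cexp (2 * π * (n - m : ℤ) * I * t) := by
  rw [ofReal_pow, ← mul_conj', map_sum, Finset.sum_mul_sum]
  refine Finset.sum_congr rfl fun n _ => Finset.sum_congr rfl fun m _ => ?_
  rw [map_mul, ← exp_conj, mul_mul_mul_comm, ← Complex.exp_add]
  simp only [map_mul, map_add, map_ofNat, conj_I, conj_ofReal, map_intCast]
  congr 2
  push_cast
  ring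

theorem integral_sq_norm_sum_mul_exp (ρ x : ℝ) (s : Finset ℤ) (c : ℤ → ℂ) :
    ∫ t in x..x + 1, ‖∑ n ∈ s, c n * cexp (2 * π * (n + ρ) * I * t)‖ ^ 2 = ∑ n ∈ s, ‖c n‖ ^ 2 := by
  have hint : ∀ n m : ℤ, IntervalIntegrable
      (fun t : ℝ => c n * conj (c m) * cexp (2 * π * (n - m : ℤ) * I * t)) volume x (x + 1) :=
    fun n m => by apply Continuous.intervalIntegrable; fun_prop
  apply ofReal_injective
  rw [← intervalIntegral.integral_ofReal]
  simp_rw [ofReal_sq_norm_sum_mul_exp]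
  rw [intervalIntegral.integral_finsetSum fun n _ => by apply Continuous.intervalIntegrable; fun_prop,
    ofReal_sum]
  refine Finset.sum_congr rfl fun n hn => ?_
  simp_rw [intervalIntegral.integral_finsetSum fun m _ => hint n m,
    intervalIntegral.integral_const_mul, integral_exp_two_pi_int_mul_I, sub_eq_zero, mul_ite,
    mul_one, mul_zero]
  rw [Finset.sum_ite_eq s n, if_pos hn, mul_conj', ofReal_pow]

theorem hasSum_intervalIntegral_nat_of_nonneg {f : ℝ → ℝ} (hf : ∀ t, 0 ≤ f t)
    (hfi : IntegrableOn f (Ioi 0)) :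
    HasSum (fun k : ℕ => ∫ t in (k : ℝ)..k + 1, f t) (∫ t in Ioi 0, f t) := by
  have hint : ∀ k : ℕ, IntervalIntegrable f volume k (k + 1) := fun k =>
    (intervalIntegrable_iff_integrableOn_Ioc_of_le (by linarith)).2 <|
      hfi.mono_set fun t ht => (Nat.cast_nonneg k).trans_lt ht.1
  rw [hasSum_iff_tendsto_nat_of_nonneg fun k =>
    intervalIntegral.integral_nonneg (by linarith) fun t _ => hf t]
  convert intervalIntegral_tendsto_integral_Ioi 0 hfi tendsto_natCast_atTop_atTop using 2 with N
  simpa using intervalIntegral.sum_integral_adjacent_intervals (a := fun k : ℕ => (k : ℝ)) (n := N)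
    fun k _ => by simpa using hint k

theorem intervalIntegral_exp_neg_mul_mul_mem_Icc {b x : ℝ} {φ : ℝ → ℝ} (hb : 0 ≤ b)
    (hφ0 : ∀ t, 0 ≤ φ t) (hφ : IntervalIntegrable φ volume x (x + 1)) :
    ∫ t in x..x + 1, rexp (-b * t) * φ t ∈
      Icc (rexp (-b * (x + 1)) * ∫ t in x..x + 1, φ t) (rexp (-b * x) * ∫ t in x..x + 1, φ t) := by
  have hψ : IntervalIntegrable (fun t => rexp (-b * t) * φ t) volume x (x + 1) :=
    hφ.continuousOn_mul (by fun_prop)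
  have hx : x ≤ x + 1 := by linarith
  rw [← intervalIntegral.integral_const_mul, ← intervalIntegral.integral_const_mul]
  constructor
  · refine intervalIntegral.integral_mono_on hx (hφ.const_mul _) hψ fun t ht => ?_
    exact mul_le_mul_of_nonneg_right (exp_le_exp.2 (by nlinarith [ht.2])) (hφ0 t)
  · refine intervalIntegral.integral_mono_on hx hψ (hφ.const_mul _) fun t ht => ?_
    exact mul_le_mul_of_nonneg_right (exp_le_exp.2 (by nlinarith [ht.1])) (hφ0 t)

theorem integral_Ioi_exp_neg_mul_mul_mem_Icc {b S : ℝ} {φ : ℝ → ℝ} (hb : 0 < b)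
    (hφ0 : ∀ t, 0 ≤ φ t) (hφ : ∀ k : ℕ, IntervalIntegrable φ volume k (k + 1))
    (hS : ∀ k : ℕ, ∫ t in (k : ℝ)..k + 1, φ t = S)
    (hint : IntegrableOn (fun t => rexp (-b * t) * φ t) (Ioi 0)) :
    ∫ t in Ioi 0, rexp (-b * t) * φ t ∈ Icc (S / (rexp b - 1)) (rexp b * S / (rexp b - 1)) := by
  set r := rexp (-b)
  have hr0 : 0 < r := exp_pos _
  have hr1 : r < 1 := exp_lt_one_iff.2 (neg_lt_zero.2 hb)
  have hpow : ∀ k : ℕ, rexp (-b * k) = r ^ k := fun k => by rw [← Real.exp_nat_mul]; ring_nf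
  have hgeom : HasSum (fun k : ℕ => r ^ k * S) ((1 - r)⁻¹ * S) :=
    (hasSum_geometric_of_lt_one hr0.le hr1).mul_right S
  have hsum :=
    hasSum_intervalIntegral_nat_of_nonneg (fun t => mul_nonneg (exp_pos _).le (hφ0 t)) hint
  have hbounds : ∀ k : ℕ,
      ∫ t in (k : ℝ)..k + 1, rexp (-b * t) * φ t ∈ Icc (r * (r ^ k * S)) (r ^ k * S) := fun k => by
    have := intervalIntegral_exp_neg_mul_mul_mem_Icc hb.le hφ0 (hφ k)
    rwa [hS, mul_add, mul_one, Real.exp_add, hpow, mul_comm (r ^ k), mul_assoc] at this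
  have hEb : rexp b * r = 1 := by rw [← Real.exp_add, add_neg_cancel, Real.exp_zero]
  have hE1 : 0 < rexp b - 1 := by linarith [one_lt_exp_iff.2 hb]
  have h1r : 1 - r = (rexp b - 1) * r := by linear_combination -hEb
  constructor
  · convert hasSum_le (fun k => (hbounds k).1) (hgeom.mul_left r) hsum using 1
    rw [h1r]
    field_simp
  · convert hasSum_le (fun k => (hbounds k).2) hsum hgeom using 1
    rw [h1r]
    field_simp
    linear_combination S * hEb

theorem memLp_two_indicator_Ici_exp_mul {z : ℂ} (hz : z.re < 0) :
    MemLp ((Ici 0).indicator fun t : ℝ => cexp (z * t)) 2 volume := by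
  rw [memLp_indicator_iff_restrict measurableSet_Ici,
    memLp_two_iff_integrable_sq_norm (by fun_prop)]
  have h2z : (2 * z).re < 0 := by simp; linarith
  refine ((integrableOn_Ici_iff_integrableOn_Ioi).2
    (integrableOn_exp_mul_complex_Ioi h2z 0).norm).congr_fun (fun t _ => ?_) measurableSet_Ici
  rw [← norm_pow, ← Complex.exp_nat_mul]
  push_cast
  ring_nf

theorem memLp_rieszFun {a : ℝ} (ha : 0 < a) (ρ : ℝ) (n : ℤ) : MemLp (rieszFun a ρ n) 2 volume :=
  memLp_two_indicator_Ici_exp_mul (by simpa using ha)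

theorem sq_norm_sum_mul_rieszFun (a ρ : ℝ) (s : Finset ℤ) (c : ℤ → ℂ) (t : ℝ) :
    ‖∑ n ∈ s, c n * rieszFun a ρ n t‖ ^ 2 = (Ici 0).indicator (fun t =>
      rexp (-(2 * a) * t) * ‖∑ n ∈ s, c n * cexp (2 * π * (n + ρ) * I * t)‖ ^ 2) t := by
  by_cases ht : t ∈ Ici 0
  · have hfactor : ∑ n ∈ s, c n * rieszFun a ρ n t =
        cexp (-a * t) * ∑ n ∈ s, c n * cexp (2 * π * (n + ρ) * I * t) := by
      rw [Finset.mul_sum]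
      refine Finset.sum_congr rfl fun n _ => ?_
      rw [rieszFun, indicator_of_mem ht, mul_left_comm, ← Complex.exp_add]
      push_cast
      ring_nf
    have hre : (-(a : ℂ) * t).re = -a * t := by simp
    rw [indicator_of_mem ht, hfactor, norm_mul, mul_pow, norm_exp, hre, ← Real.exp_nat_mul]
    congr 2
    push_cast
    ring
  · simp [rieszFun, ht]

theorem stochastic_datko_pazy_stmt11_general
    (a ρ : ℝ) (ha : 0 < a) :
    (∀ n : ℤ, MemLp (rieszFun a ρ n) 2 volume) ∧
    ∀ (s : Finset ℤ) (c : ℤ → ℂ),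
      (Real.exp (-(2 * a)) / (Real.exp (2 * a) - 1)) * ∑ n ∈ s, ‖c n‖ ^ 2
          ≤ ∫ t : ℝ, ‖∑ n ∈ s, c n * rieszFun a ρ n t‖ ^ 2 ∧
      ∫ t : ℝ, ‖∑ n ∈ s, c n * rieszFun a ρ n t‖ ^ 2
          ≤ (Real.exp (2 * a) / (Real.exp (2 * a) - 1)) * ∑ n ∈ s, ‖c n‖ ^ 2 := by
  refine ⟨memLp_rieszFun ha ρ, fun s c => ?_⟩
  set φ : ℝ → ℝ := fun t => ‖∑ n ∈ s, c n * cexp (2 * π * (n + ρ) * I * t)‖ ^ 2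
  have hF : (fun t => ‖∑ n ∈ s, c n * rieszFun a ρ n t‖ ^ 2) =
      (Ici 0).indicator fun t => rexp (-(2 * a) * t) * φ t :=
    funext (sq_norm_sum_mul_rieszFun a ρ s c)
  have hFint : Integrable (fun t => ‖∑ n ∈ s, c n * rieszFun a ρ n t‖ ^ 2) := by
    have hmem : MemLp (fun t => ∑ n ∈ s, c n * rieszFun a ρ n t) 2 volume :=
      memLp_finsetSum s fun n _ => (memLp_rieszFun ha ρ n).const_mul (c n)
    exact (memLp_two_iff_integrable_sq_norm hmem.1).1 hmem
  rw [hF, integrable_indicator_iff measurableSet_Ici] at hFint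
  have h2a : 0 < 2 * a := by positivity
  have hbounds := integral_Ioi_exp_neg_mul_mul_mem_Icc h2a (fun t => sq_nonneg _)
    (fun k => (by fun_prop : Continuous φ).intervalIntegrable _ _)
    (fun k => integral_sq_norm_sum_mul_exp ρ k s c) (hFint.mono_set Ioi_subset_Ici_self)
  rw [hF, integral_indicator measurableSet_Ici, integral_Ici_eq_integral_Ioi]
  refine ⟨le_trans ?_ hbounds.1, by rw [div_mul_eq_mul_div]; exact hbounds.2⟩
  have hE : 0 < rexp (2 * a) - 1 := by linarith [one_lt_exp_iff.2 h2a]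
  rw [div_mul_eq_mul_div]
  gcongr
  exact mul_le_of_le_one_left (Finset.sum_nonneg fun n _ => sq_nonneg _)
    (exp_le_one_iff.2 (by linarith))

/-- For `a > 0` and `ρ ∈ [0,1)`, the functions
`fₙ(t) = e^{-at + 2π(n+ρ)it} 𝟙_{[0,∞)}(t)` belong to `L²(ℝ;ℂ)` and form a Riesz sequence
in `L²(ℝ)`: for every finitely supported family `(cₙ)_{n∈ℤ}` of complex numbers,
`(e^{-2a}/(e^{2a}-1)) ∑ₙ |cₙ|² ≤ ‖∑ₙ cₙ fₙ‖²_{L²(ℝ)} ≤ (e^{2a}/(e^{2a}-1)) ∑ₙ |cₙ|²`. -/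
theorem stochastic_datko_pazy_stmt11
    (a ρ : ℝ) (ha : 0 < a) (hρ : ρ ∈ Set.Ico (0 : ℝ) 1) :
    (∀ n : ℤ, MemLp (rieszFun a ρ n) 2 volume) ∧
    ∀ (s : Finset ℤ) (c : ℤ → ℂ),
      (Real.exp (-(2 * a)) / (Real.exp (2 * a) - 1)) * ∑ n ∈ s, ‖c n‖ ^ 2
          ≤ ∫ t : ℝ, ‖∑ n ∈ s, c n * rieszFun a ρ n t‖ ^ 2 ∧
      ∫ t : ℝ, ‖∑ n ∈ s, c n * rieszFun a ρ n t‖ ^ 2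
          ≤ (Real.exp (2 * a) / (Real.exp (2 * a) - 1)) * ∑ n ∈ s, ‖c n‖ ^ 2 :=
  stochastic_datko_pazy_stmt11_general a ρ ha

end
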